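/- arXiv:1907.10852 — 2 statements merged into one kernel-verified Lean document; each statement's English description precedes it below -/
import Mathlib

section
/- Let K, M, L be symmetric N×N real matrices with M positive definite. Suppose λ̃₀ ∈ ℝ and ũ₀ ∈ ℝᴺ satisfy K·ũ₀ = λ̃₀·M·ũ₀, ũ₀ ≠ 0, and assume the kernel of K - λ̃₀·M is spanned by ũ₀ (simple eigenvalue). Then the (N+1)×(N+1) block linear system [[K - λ̃₀·M, -M·ũ₀],[ũ₀^⊤·M, 0]]·[u̇; λ̇] = [-L·ũ₀; 0] has a unique solution (u̇, λ̇) ∈ ℝᴺ × ℝ. -/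
open Matrix

/-!
The bordered system is square, so it suffices that its homogeneous version has only the trivial
solution. Pairing `A v = s b` with a left null vector `u₀` of `A` kills the left side, so `s = 0`
as `u₀ ⬝ᵥ b ≠ 0`; then `v` lies in the kernel `span {u₀}`, and the normalization `c ⬝ᵥ v = 0`
with `c ⬝ᵥ u₀ ≠ 0` forces `v = 0`. Here `A = K - λ₀ M` is symmetric, so `u₀` is also a
left null vector, and `b = M u₀`, `c = u₀ᵀ M` pair with `u₀` to `u₀ᵀ M u₀ > 0`.
-/

namespace Matrix

variable {𝕜 n : Type*} [Field 𝕜] [Fintype n]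

def borderedLin (A : Matrix n n 𝕜) (b c : n → 𝕜) : (n → 𝕜) × 𝕜 →ₗ[𝕜] (n → 𝕜) × 𝕜 where
  toFun p := (A *ᵥ p.1 - p.2 • b, c ⬝ᵥ p.1)
  map_add' p q := by
    refine Prod.ext ?_ (dotProduct_add c p.1 q.1)
    simp only [Prod.fst_add, Prod.snd_add, mulVec_add, add_smul]
    abel
  map_smul' a p := by
    ext <;> simp [mulVec_smul, smul_sub, smul_smul]

@[simp]
theorem borderedLin_apply (A : Matrix n n 𝕜) (b c : n → 𝕜) (p : (n → 𝕜) × 𝕜) :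
    borderedLin A b c p = (A *ᵥ p.1 - p.2 • b, c ⬝ᵥ p.1) := rfl

theorem borderedLin_injective {A : Matrix n n 𝕜} {b c u₀ : n → 𝕜} (hA : u₀ ᵥ* A = 0)
    (hker : ∀ v, A *ᵥ v = 0 → ∃ t : 𝕜, v = t • u₀) (hb : u₀ ⬝ᵥ b ≠ 0) (hc : c ⬝ᵥ u₀ ≠ 0) :
    Function.Injective (borderedLin A b c) := by
  rw [injective_iff_map_eq_zero]
  rintro ⟨v, s⟩ hp
  simp only [borderedLin_apply, Prod.mk_eq_zero, sub_eq_zero] at hp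
  obtain ⟨hAv, hcv⟩ := hp
  have hs : s = 0 := by
    have : s * (u₀ ⬝ᵥ b) = 0 := by
      rw [← smul_eq_mul, ← dotProduct_smul, ← hAv, dotProduct_mulVec, hA, zero_dotProduct]
    exact (mul_eq_zero.mp this).resolve_right hb
  obtain ⟨t, rfl⟩ := hker v (by rw [hAv, hs, zero_smul])
  have ht : t = 0 := by
    rw [dotProduct_smul, smul_eq_mul] at hcv
    exact (mul_eq_zero.mp hcv).resolve_right hc
  simp [hs, ht]

theorem borderedLin_bijective {A : Matrix n n 𝕜} {b c u₀ : n → 𝕜} (hA : u₀ ᵥ* A = 0)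
    (hker : ∀ v, A *ᵥ v = 0 → ∃ t : 𝕜, v = t • u₀) (hb : u₀ ⬝ᵥ b ≠ 0) (hc : c ⬝ᵥ u₀ ≠ 0) :
    Function.Bijective (borderedLin A b c) :=
  have hinj := borderedLin_injective hA hker hb hc
  ⟨hinj, LinearMap.injective_iff_surjective.mp hinj⟩

end Matrix

theorem block_system_unique_solution_general
    {N : ℕ} (K M L : Matrix (Fin N) (Fin N) ℝ)
    (hK : K.IsSymm) (hMsym : M.IsSymm)
    (hM : M.PosDef)
    (lam₀ : ℝ) (u₀ : Fin N → ℝ) (hu₀ : u₀ ≠ 0)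
    (heig : K *ᵥ u₀ = lam₀ • (M *ᵥ u₀))
    (hsimple : ∀ v : Fin N → ℝ, (K - lam₀ • M) *ᵥ v = 0 → ∃ c : ℝ, v = c • u₀) :
    ∃! p : (Fin N → ℝ) × ℝ,
      (K - lam₀ • M) *ᵥ p.1 - p.2 • (M *ᵥ u₀) = -(L *ᵥ u₀) ∧
      u₀ ⬝ᵥ (M *ᵥ p.1) = 0 := by
  have hnull : u₀ ᵥ* (K - lam₀ • M) = 0 := by
    rw [← mulVec_transpose, transpose_sub, transpose_smul, hK.eq, hMsym.eq, sub_mulVec,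
      smul_mulVec, heig, sub_self]
  have hpos : 0 < u₀ ⬝ᵥ (M *ᵥ u₀) := by simpa using hM.dotProduct_mulVec_pos hu₀
  have hbij := borderedLin_bijective (c := u₀ ᵥ* M) hnull hsimple hpos.ne'
    (by rw [← dotProduct_mulVec]; exact hpos.ne')
  simpa only [borderedLin_apply, Prod.ext_iff, dotProduct_mulVec] using
    hbij.existsUnique (-(L *ᵥ u₀), 0)

theorem block_system_unique_solution
    {N : ℕ} (K M L : Matrix (Fin N) (Fin N) ℝ)
    (hK : K.IsSymm) (hMsym : M.IsSymm) (hL : L.IsSymm)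
    (hM : M.PosDef)
    (lam₀ : ℝ) (u₀ : Fin N → ℝ) (hu₀ : u₀ ≠ 0)
    (heig : K *ᵥ u₀ = lam₀ • (M *ᵥ u₀))
    (hsimple : ∀ v : Fin N → ℝ, (K - lam₀ • M) *ᵥ v = 0 → ∃ c : ℝ, v = c • u₀) :
    ∃! p : (Fin N → ℝ) × ℝ,
      (K - lam₀ • M) *ᵥ p.1 - p.2 • (M *ᵥ u₀) = -(L *ᵥ u₀) ∧
      u₀ ⬝ᵥ (M *ᵥ p.1) = 0 :=
  block_system_unique_solution_general K M L hK hMsym hM lam₀ u₀ hu₀ heig hsimple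
end

section
/- Let T : Ω → T(Ω) be a volume-preserving C² diffeomorphism and S : Ω → ℝⁿ a C¹ map (the perturbation vector field). Define Ȧ := -((DT)^{-1}·(DS)·(DT)^{-1}·(DT)^{-⊤})^{sym}. Then for all compactly supported C¹ functions f, g : Ω → ℝ: -∫_Ω Ȧ·∇f • ∇g dℓ = ∫_{T(Ω)} (D(S∘T^{-1}))^{sym}·∇(f∘T^{-1}) • ∇(g∘T^{-1}) dℓ. -/
/-!
Substitute `y = T x`: volume preservation removes the Jacobian, and since `T` is `C¹` with
invertible derivative, the inverse function theorem gives `D(T⁻¹)(T x) = (DT x)⁻¹`, so the chain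
rule reads `∇(f ∘ T⁻¹)(T x) = (DT x)⁻ᵀ ∇f(x)`. The two integrands then agree pointwise by the
matrix identity `B (D B)ˢʸᵐ Bᵀ = (B D B Bᵀ)ˢʸᵐ` with `B = (DT x)⁻¹` and `D = DS x`.
-/

open Matrix MeasureTheory Filter
open scoped RealInnerProductSpace

namespace Matrix

theorem mul_smul_add_transpose_mul_transpose {ι R : Type*} [Fintype ι] [CommRing R] (c : R)
    (B D : Matrix ι ι R) :
    B * (c • (D * B + (D * B)ᵀ)) * Bᵀ = c • (B * D * B * Bᵀ + (B * D * B * Bᵀ)ᵀ) := by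
  simp only [Matrix.mul_smul, Matrix.smul_mul, Matrix.mul_add, Matrix.add_mul,
    transpose_mul, transpose_transpose, Matrix.mul_assoc]

variable {ι 𝕜 : Type*} [Fintype ι] [DecidableEq ι] [RCLike 𝕜]

theorem det_toEuclideanCLM (A : Matrix ι ι 𝕜) :
    (toEuclideanCLM (𝕜 := 𝕜) A).det = A.det :=
  LinearMap.det_toLin _ A

theorem toEuclideanCLM_transpose (A : Matrix ι ι ℝ) :
    toEuclideanCLM (𝕜 := ℝ) Aᵀ = (toEuclideanCLM (𝕜 := ℝ) A).adjoint := by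
  rw [← ContinuousLinearMap.star_eq_adjoint, ← map_star, star_eq_conjTranspose,
    conjTranspose_eq_transpose_of_trivial]

theorem continuous_toEuclideanCLM :
    Continuous (toEuclideanCLM (n := ι) (𝕜 := 𝕜)) :=
  (toEuclideanCLM (n := ι) (𝕜 := 𝕜)).toAlgEquiv.toLinearMap.continuous_of_finiteDimensional

theorem toEuclideanCLM_nonsing_inv_comp {A : Matrix ι ι 𝕜} (hA : IsUnit A.det) :
    (toEuclideanCLM (𝕜 := 𝕜) A⁻¹).comp (toEuclideanCLM (𝕜 := 𝕜) A) = .id 𝕜 _ := by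
  rw [← ContinuousLinearMap.mul_def, ← map_mul, nonsing_inv_mul A hA, map_one,
    ContinuousLinearMap.one_def]

theorem toEuclideanCLM_comp_nonsing_inv {A : Matrix ι ι 𝕜} (hA : IsUnit A.det) :
    (toEuclideanCLM (𝕜 := 𝕜) A).comp (toEuclideanCLM (𝕜 := 𝕜) A⁻¹) = .id 𝕜 _ := by
  rw [← ContinuousLinearMap.mul_def, ← map_mul, mul_nonsing_inv A hA, map_one,
    ContinuousLinearMap.one_def]

end Matrix

theorem HasFDerivAt.gradient_comp {𝕜 E F : Type*} [RCLike 𝕜]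
    [NormedAddCommGroup E] [InnerProductSpace 𝕜 E] [CompleteSpace E]
    [NormedAddCommGroup F] [InnerProductSpace 𝕜 F] [CompleteSpace F]
    {φ : E → F} {L : E →L[𝕜] F} {f : F → 𝕜} {y : E}
    (hφ : HasFDerivAt φ L y) (hf : DifferentiableAt 𝕜 f (φ y)) :
    gradient (f ∘ φ) y = L.adjoint (gradient f (φ y)) := by
  refine ext_inner_right 𝕜 fun w => ?_
  rw [inner_gradient_left, (hf.hasFDerivAt.comp y hφ).fderiv,
    ContinuousLinearMap.adjoint_inner_left, inner_gradient_left, ContinuousLinearMap.comp_apply]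

theorem hasFDerivAt_of_leftInverse_of_continuousOn {𝕜 E F : Type*} [RCLike 𝕜]
    [NormedAddCommGroup E] [NormedSpace 𝕜 E] [CompleteSpace E]
    [NormedAddCommGroup F] [NormedSpace 𝕜 F] [CompleteSpace F]
    {U : Set E} (hU : IsOpen U) {f : E → F} {g : F → E} {f' : E → E →L[𝕜] F}
    (hf : ∀ x ∈ U, HasFDerivAt f (f' x) x) (hf' : ContinuousOn f' U)
    (hgf : ∀ x ∈ U, g (f x) = x) {x : E} (hx : x ∈ U) {L : F →L[𝕜] E}
    (hLf : L.comp (f' x) = .id 𝕜 E) (hfL : (f' x).comp L = .id 𝕜 F) :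
    HasFDerivAt g L (f x) := by
  have hstrict : HasStrictFDerivAt f
      (ContinuousLinearEquiv.equivOfInverse' (f' x) L hfL hLf : E →L[𝕜] F) x :=
    hasStrictFDerivAt_of_hasFDerivAt_of_continuousAt
      (eventually_of_mem (hU.mem_nhds hx) hf) (hf'.continuousAt (hU.mem_nhds hx))
  exact (hstrict.to_local_left_inverse (eventually_of_mem (hU.mem_nhds hx) hgf)).hasFDerivAt

theorem inner_symm_mul_gradient_comp_eq {n : ℕ} {f g : EuclideanSpace ℝ (Fin n) → ℝ}
    {ψ : EuclideanSpace ℝ (Fin n) → EuclideanSpace ℝ (Fin n)} {B D : Matrix (Fin n) (Fin n) ℝ}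
    {x y : EuclideanSpace ℝ (Fin n)} (hψ : HasFDerivAt ψ (toEuclideanCLM (𝕜 := ℝ) B) y)
    (hψy : ψ y = x) (hf : DifferentiableAt ℝ f x) (hg : DifferentiableAt ℝ g x) :
    ⟪toEuclideanCLM (𝕜 := ℝ) ((1 / 2 : ℝ) • (D * B + (D * B)ᵀ)) (gradient (f ∘ ψ) y),
        gradient (g ∘ ψ) y⟫ =
      ⟪toEuclideanCLM (𝕜 := ℝ) ((1 / 2 : ℝ) • (B * D * B * Bᵀ + (B * D * B * Bᵀ)ᵀ))
        (gradient f x), gradient g x⟫ := by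
  subst hψy
  rw [hψ.gradient_comp hf, hψ.gradient_comp hg, ContinuousLinearMap.adjoint_inner_right,
    ← toEuclideanCLM_transpose, ← mul_smul_add_transpose_mul_transpose, map_mul, map_mul]
  rfl

theorem linear_response_matrix_pushforward_form_general
    {n : ℕ} (Ω : Set (EuclideanSpace ℝ (Fin n))) (hΩ : IsOpen Ω)
    (T Tinv : EuclideanSpace ℝ (Fin n) → EuclideanSpace ℝ (Fin n))
    (hTinj : Set.InjOn T Ω)
    (hTinv : ∀ x ∈ Ω, Tinv (T x) = x)
    (DT DS : EuclideanSpace ℝ (Fin n) → Matrix (Fin n) (Fin n) ℝ)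
    (hDT : ∀ x ∈ Ω, HasFDerivAt T (Matrix.toEuclideanCLM (𝕜 := ℝ) (DT x)) x)
    (hDTcont : ContinuousOn DT Ω)
    (hDTinv : ∀ x ∈ Ω, IsUnit (DT x).det)
    (hvol : ∀ x ∈ Ω, |(DT x).det| = 1)
    (Adot : EuclideanSpace ℝ (Fin n) → Matrix (Fin n) (Fin n) ℝ)
    (hAdot : ∀ x,
      Adot x = -((1 : ℝ) / 2) •
        (((DT x)⁻¹ * DS x * (DT x)⁻¹ * ((DT x)⁻¹)ᵀ) +
         ((DT x)⁻¹ * DS x * (DT x)⁻¹ * ((DT x)⁻¹)ᵀ)ᵀ))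
    (f g : EuclideanSpace ℝ (Fin n) → ℝ)
    (hf : ContDiff ℝ 1 f) (hg : ContDiff ℝ 1 g) :
    -∫ x in Ω, ⟪Matrix.toEuclideanCLM (𝕜 := ℝ) (Adot x) (gradient f x), gradient g x⟫ =
    ∫ y in T '' Ω,
      ⟪Matrix.toEuclideanCLM (𝕜 := ℝ)
          (((1 : ℝ) / 2) •
            ((DS (Tinv y) * (DT (Tinv y))⁻¹) + (DS (Tinv y) * (DT (Tinv y))⁻¹)ᵀ))
        (gradient (f ∘ Tinv) y), gradient (g ∘ Tinv) y⟫ := by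
  have hTinv_deriv : ∀ x ∈ Ω, HasFDerivAt Tinv (toEuclideanCLM (𝕜 := ℝ) (DT x)⁻¹) (T x) :=
    fun x hx => hasFDerivAt_of_leftInverse_of_continuousOn hΩ hDT
      (continuous_toEuclideanCLM.comp_continuousOn hDTcont) hTinv hx
      (toEuclideanCLM_nonsing_inv_comp (hDTinv x hx))
      (toEuclideanCLM_comp_nonsing_inv (hDTinv x hx))
  rw [integral_image_eq_integral_abs_det_fderiv_smul volume hΩ.measurableSet
    (fun x hx => (hDT x hx).hasFDerivWithinAt) hTinj, ← integral_neg]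
  refine setIntegral_congr_fun hΩ.measurableSet fun x hx => ?_
  rw [det_toEuclideanCLM, hvol x hx, one_smul, hTinv x hx,
    inner_symm_mul_gradient_comp_eq (hTinv_deriv x hx) (hTinv x hx)
      (hf.differentiable one_ne_zero x) (hg.differentiable one_ne_zero x),
    hAdot, neg_smul, map_neg, _root_.neg_apply, inner_neg_left, neg_neg]

theorem linear_response_matrix_pushforward_form
    {n : ℕ} (Ω : Set (EuclideanSpace ℝ (Fin n))) (hΩ : IsOpen Ω)
    (T Tinv S : EuclideanSpace ℝ (Fin n) → EuclideanSpace ℝ (Fin n))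
    (hTinj : Set.InjOn T Ω) (hTΩ : IsOpen (T '' Ω))
    (hTinv : ∀ x ∈ Ω, Tinv (T x) = x)
    (hTinv' : ∀ y ∈ T '' Ω, T (Tinv y) = y)
    (DT DS : EuclideanSpace ℝ (Fin n) → Matrix (Fin n) (Fin n) ℝ)
    (hDT : ∀ x ∈ Ω, HasFDerivAt T (Matrix.toEuclideanCLM (𝕜 := ℝ) (DT x)) x)
    (hDS : ∀ x ∈ Ω, HasFDerivAt S (Matrix.toEuclideanCLM (𝕜 := ℝ) (DS x)) x)
    (hDTcont : ContinuousOn DT Ω) (hDScont : ContinuousOn DS Ω)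
    (hDTinv : ∀ x ∈ Ω, IsUnit (DT x).det)
    (hvol : ∀ x ∈ Ω, |(DT x).det| = 1)
    (Adot : EuclideanSpace ℝ (Fin n) → Matrix (Fin n) (Fin n) ℝ)
    (hAdot : ∀ x,
      Adot x = -((1 : ℝ) / 2) •
        (((DT x)⁻¹ * DS x * (DT x)⁻¹ * ((DT x)⁻¹)ᵀ) +
         ((DT x)⁻¹ * DS x * (DT x)⁻¹ * ((DT x)⁻¹)ᵀ)ᵀ))
    (f g : EuclideanSpace ℝ (Fin n) → ℝ)
    (hf : ContDiff ℝ 1 f) (hg : ContDiff ℝ 1 g)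
    (hfc : HasCompactSupport f) (hgc : HasCompactSupport g)
    (hfs : tsupport f ⊆ Ω) (hgs : tsupport g ⊆ Ω) :
    -∫ x in Ω, ⟪Matrix.toEuclideanCLM (𝕜 := ℝ) (Adot x) (gradient f x), gradient g x⟫ =
    ∫ y in T '' Ω,
      ⟪Matrix.toEuclideanCLM (𝕜 := ℝ)
          (((1 : ℝ) / 2) •
            ((DS (Tinv y) * (DT (Tinv y))⁻¹) + (DS (Tinv y) * (DT (Tinv y))⁻¹)ᵀ))
        (gradient (f ∘ Tinv) y), gradient (g ∘ Tinv) y⟫ :=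
  linear_response_matrix_pushforward_form_general Ω hΩ T Tinv hTinj hTinv DT DS hDT hDTcont hDTinv
    hvol Adot hAdot f g hf hg
end
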